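/- arXiv:1310.4289 — 4 statements merged into one kernel-verified Lean document; each statement's English description precedes it below -/
import Mathlib

section
/- Let 𝔠 be a nonzero fractional ideal of K and let α₀ ∈ K^×. Then the map H ↦ d(ᾱ₀)·H·d(α₀) is a bijection from Λ₂^{α₀𝔠}(𝓞) onto Λ₂^{𝔠}(𝓞), and it restricts to a bijection from Λ₂^{α₀𝔠}(𝓞)⁺ onto Λ₂^{𝔠}(𝓞)⁺ (i.e. it preserves positive definiteness in both directions). -/
open scoped ComplexOrder nonZeroDivisors
open NumberField Matrix

noncomputable section

/-- `d(a) = diag(1, a)` as a 2×2 complex matrix. -/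
def dMat (a : ℂ) : Matrix (Fin 2) (Fin 2) ℂ := Matrix.diagonal ![1, a]

/-- The lattice `Λ₂^𝔠(𝓞)` of hermitian matrices `[[n, α], [ᾱ, m / N(𝔠)]]` with
`n, m ∈ ℤ` and `α ∈ (√-D)⁻¹ 𝔠⁻¹`, regarded as complex matrices.  Here `sd ∈ K` plays
the role of `√-D`. -/
def Lambda2 (K : IntermediateField ℚ ℂ) [NumberField K] (sd : K)
    (c : FractionalIdeal (𝓞 K)⁰ K) : Set (Matrix (Fin 2) (Fin 2) ℂ) :=
  { H | ∃ (n m : ℤ) (a : K),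
      a ∈ ((FractionalIdeal.spanSingleton (𝓞 K)⁰ sd)⁻¹ * c⁻¹) ∧
      H = !![(n : ℂ), (a : ℂ); star (a : ℂ), (m : ℂ) / (FractionalIdeal.absNorm c : ℂ)] }

/-- The subset `Λ₂^𝔠(𝓞)⁺` of positive definite elements. -/
def Lambda2Pos (K : IntermediateField ℚ ℂ) [NumberField K] (sd : K)
    (c : FractionalIdeal (𝓞 K)⁰ K) : Set (Matrix (Fin 2) (Fin 2) ℂ) :=
  { H | H ∈ Lambda2 K sd c ∧ H.PosDef }

/-!
Conjugation `H ↦ d(β̄) H d(β)` multiplies the off-diagonal entry by `β` and the lower-right entry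
by `β̄β`. Since `K` is imaginary quadratic, its two complex embeddings are the inclusion and its
conjugate, so `N(β) = β̄β` and `N(β𝔠) = β̄β N(𝔠)`; together with
`(√-D)⁻¹ (β𝔠)⁻¹ = β⁻¹ (√-D)⁻¹ 𝔠⁻¹` this shows that the map sends `Λ₂^{β𝔠}` into `Λ₂^𝔠`.
Congruence by the invertible `d(β)` preserves positive definiteness, and `β⁻¹` gives the inverse.
-/

open FractionalIdeal

def dConj (a : ℂ) (H : Matrix (Fin 2) (Fin 2) ℂ) : Matrix (Fin 2) (Fin 2) ℂ :=
  dMat (star a) * H * dMat a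

lemma dMat_mul_dMat (a b : ℂ) : dMat a * dMat b = dMat (a * b) := by
  rw [dMat, dMat, dMat, Matrix.diagonal_mul_diagonal']
  congr 1
  ext i
  fin_cases i <;> simp

lemma dMat_one : dMat 1 = 1 := by
  simp [dMat, ← Matrix.diagonal_one]

lemma dMat_mul_comm (a b : ℂ) : dMat a * dMat b = dMat b * dMat a := by
  rw [dMat_mul_dMat, dMat_mul_dMat, mul_comm]

lemma conjTranspose_dMat (a : ℂ) : (dMat a)ᴴ = dMat (star a) := by
  simp [dMat, Matrix.diagonal_conjTranspose]

lemma isUnit_dMat {a : ℂ} (ha : a ≠ 0) : IsUnit (dMat a) :=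
  IsUnit.of_mul_eq_one (dMat a⁻¹) (by rw [dMat_mul_dMat, mul_inv_cancel₀ ha, dMat_one])

lemma dConj_dConj (a b : ℂ) (H : Matrix (Fin 2) (Fin 2) ℂ) :
    dConj a (dConj b H) = dConj (b * a) H := by
  simp only [dConj, star_mul', ← dMat_mul_dMat, Matrix.mul_assoc]
  rw [← Matrix.mul_assoc, ← Matrix.mul_assoc (dMat (star b)), dMat_mul_comm]

lemma dConj_one (H : Matrix (Fin 2) (Fin 2) ℂ) : dConj 1 H = H := by
  simp [dConj, dMat_one]

lemma dConj_of (a p q r s : ℂ) :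
    dConj a !![p, q; r, s] = !![p, q * a; star a * r, star a * s * a] := by
  ext i j
  fin_cases i <;> fin_cases j <;> simp [dConj, dMat, Matrix.mul_apply, Fin.sum_univ_two]

lemma posDef_dConj {H : Matrix (Fin 2) (Fin 2) ℂ} (hH : H.PosDef) {a : ℂ} (ha : a ≠ 0) :
    (dConj a H).PosDef := by
  rw [dConj, ← conjTranspose_dMat]
  exact hH.conjTranspose_mul_mul_same (Matrix.mulVec_injective_iff_isUnit.mpr (isUnit_dMat ha))

lemma star_ne_self_of_sq_eq_neg {z : ℂ} {r : ℝ} (hr : 0 < r) (hz : z ^ 2 = -(r : ℂ)) :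
    star z ≠ z := by
  intro h
  obtain ⟨x, rfl⟩ := Complex.conj_eq_iff_real.mp h
  have : x ^ 2 = -r := by exact_mod_cast hz
  nlinarith [sq_nonneg x]

lemma mul_mem_of_mem_spanSingleton_inv_mul {R K : Type*} [CommRing R] [IsDomain R] [Field K]
    [Algebra R K] [IsFractionRing R K] {β : K} (hβ : β ≠ 0) {J : FractionalIdeal R⁰ K} {a : K}
    (ha : a ∈ spanSingleton R⁰ β⁻¹ * J) : β * a ∈ J := by
  obtain ⟨z, hz, rfl⟩ := mem_singleton_mul.mp ha
  rwa [← mul_assoc, mul_inv_cancel₀ hβ, one_mul]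

section QuadraticSubfield

variable {K : IntermediateField ℚ ℂ} [NumberField K] (hdeg : Module.finrank ℚ K = 2)
  {s : K} (hs : star (s : ℂ) ≠ s)
include hdeg hs

lemma algebraMap_norm_eq_mul_star (x : K) :
    ((Algebra.norm ℚ x : ℚ) : ℂ) = x * star (x : ℂ) := by
  classical
  let ι : K →ₐ[ℚ] ℂ := K.val
  let σ : K →ₐ[ℚ] ℂ := (Complex.conjAe.toAlgHom.restrictScalars ℚ).comp ι
  have hισ : ι ≠ σ := fun h => hs (congrArg (· s) h).symm
  have huniv : (Finset.univ : Finset (K →ₐ[ℚ] ℂ)) = {ι, σ} := by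
    refine (Finset.eq_univ_of_card _ ?_).symm
    rw [Finset.card_pair hισ, AlgHom.card, hdeg]
  have := Algebra.norm_eq_prod_embeddings ℚ ℂ x
  rw [huniv, Finset.prod_pair hισ] at this
  exact this

lemma algebraNorm_nonneg (x : K) : 0 ≤ Algebra.norm ℚ x := by
  have h : ((Algebra.norm ℚ x : ℚ) : ℂ) = (Complex.normSq x : ℂ) := by
    rw [algebraMap_norm_eq_mul_star hdeg hs, Complex.star_def, Complex.mul_conj]
  have : ((Algebra.norm ℚ x : ℚ) : ℝ) = Complex.normSq x := by exact_mod_cast h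
  exact_mod_cast this ▸ Complex.normSq_nonneg _

lemma absNorm_spanSingleton_mul (β : K) (c : FractionalIdeal (𝓞 K)⁰ K) :
    ((absNorm (spanSingleton (𝓞 K)⁰ β * c) : ℚ) : ℂ) = β * star (β : ℂ) * (absNorm c : ℚ) := by
  rw [map_mul, absNorm_span_singleton, abs_of_nonneg (algebraNorm_nonneg hdeg hs β), Rat.cast_mul,
    algebraMap_norm_eq_mul_star hdeg hs]

lemma mapsTo_dConj_Lambda2 (c : FractionalIdeal (𝓞 K)⁰ K) {β : K} (hβ : β ≠ 0) :
    Set.MapsTo (dConj β) (Lambda2 K s (spanSingleton (𝓞 K)⁰ β * c)) (Lambda2 K s c) := by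
  rintro _ ⟨n, m, a, ha, rfl⟩
  have hmem : β * a ∈ (spanSingleton (𝓞 K)⁰ s)⁻¹ * c⁻¹ := by
    rw [mul_inv, mul_left_comm, spanSingleton_inv] at ha
    exact mul_mem_of_mem_spanSingleton_inv_mul hβ ha
  have hβ' : (β : ℂ) ≠ 0 := by exact_mod_cast hβ
  refine ⟨n, m, β * a, hmem, ?_⟩
  rw [dConj_of, absNorm_spanSingleton_mul hdeg hs]
  ext i j
  fin_cases i <;> fin_cases j <;> simp
  · ring
  · rw [← mul_div_mul_left (m : ℂ) ((absNorm c : ℚ) : ℂ)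
      (mul_ne_zero hβ' ((_root_.map_ne_zero (starRingEnd ℂ)).mpr hβ'))]
    ring

lemma mapsTo_dConj_Lambda2Pos (c : FractionalIdeal (𝓞 K)⁰ K) {β : K} (hβ : β ≠ 0) :
    Set.MapsTo (dConj β) (Lambda2Pos K s (spanSingleton (𝓞 K)⁰ β * c)) (Lambda2Pos K s c) :=
  fun _ ⟨hH, hpos⟩ =>
    ⟨mapsTo_dConj_Lambda2 hdeg hs c hβ hH, posDef_dConj hpos (by exact_mod_cast hβ)⟩

end QuadraticSubfield

lemma bijOn_dConj_of_mapsTo {K : IntermediateField ℚ ℂ} [NumberField K]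
    (S : FractionalIdeal (𝓞 K)⁰ K → Set (Matrix (Fin 2) (Fin 2) ℂ))
    (hS : ∀ β : K, β ≠ 0 → ∀ c, Set.MapsTo (dConj β) (S (spanSingleton (𝓞 K)⁰ β * c)) (S c))
    (c : FractionalIdeal (𝓞 K)⁰ K) {α : K} (hα : α ≠ 0) :
    Set.BijOn (dConj α) (S (spanSingleton (𝓞 K)⁰ α * c)) (S c) := by
  have hα' : (α : ℂ) ≠ 0 := by exact_mod_cast hα
  have hinv : Set.InvOn (dConj (α⁻¹ : K)) (dConj α) (S (spanSingleton (𝓞 K)⁰ α * c)) (S c) := by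
    constructor <;> intro H _ <;>
      simp only [dConj_dConj, IntermediateField.coe_inv, mul_inv_cancel₀, inv_mul_cancel₀, hα',
        ne_eq, not_false_eq_true, dConj_one]
  have hcancel : spanSingleton (𝓞 K)⁰ α⁻¹ * (spanSingleton (𝓞 K)⁰ α * c) = c := by
    rw [← mul_assoc, spanSingleton_mul_spanSingleton, inv_mul_cancel₀ hα, spanSingleton_one,
      one_mul]
  refine hinv.bijOn (hS α hα c) ?_
  simpa only [hcancel] using hS α⁻¹ (inv_ne_zero hα) (spanSingleton (𝓞 K)⁰ α * c)

theorem stmt0_general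
    (D : ℕ) (hD : 0 < D)
    (K : IntermediateField ℚ ℂ) [NumberField K]
    (hdeg : Module.finrank ℚ K = 2)
    (sd : K) (hsd : (sd : ℂ) ^ 2 = -(D : ℂ))
    (c : FractionalIdeal (𝓞 K)⁰ K)
    (α₀ : K) (hα₀ : α₀ ≠ 0) :
    Set.BijOn (fun H => dMat (star (α₀ : ℂ)) * H * dMat (α₀ : ℂ))
      (Lambda2 K sd (FractionalIdeal.spanSingleton (𝓞 K)⁰ α₀ * c))
      (Lambda2 K sd c) ∧
    Set.BijOn (fun H => dMat (star (α₀ : ℂ)) * H * dMat (α₀ : ℂ))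
      (Lambda2Pos K sd (FractionalIdeal.spanSingleton (𝓞 K)⁰ α₀ * c))
      (Lambda2Pos K sd c) := by
  have hsd_nonreal : star (sd : ℂ) ≠ sd :=
    star_ne_self_of_sq_eq_neg (r := D) (by exact_mod_cast hD) (by simpa using hsd)
  exact ⟨bijOn_dConj_of_mapsTo _ (fun _ hβ c => mapsTo_dConj_Lambda2 hdeg hsd_nonreal c hβ) c hα₀,
    bijOn_dConj_of_mapsTo _ (fun _ hβ c => mapsTo_dConj_Lambda2Pos hdeg hsd_nonreal c hβ) c hα₀⟩

/-- For a nonzero fractional ideal `𝔠` of `K` and `α₀ ∈ K^×`, the map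
`H ↦ d(ᾱ₀) H d(α₀)` is a bijection from `Λ₂^{α₀𝔠}(𝓞)` onto `Λ₂^{𝔠}(𝓞)`, restricting to
a bijection from `Λ₂^{α₀𝔠}(𝓞)⁺` onto `Λ₂^{𝔠}(𝓞)⁺`. -/
theorem stmt0
    (D : ℕ) (hD : 0 < D)
    (K : IntermediateField ℚ ℂ) [NumberField K]
    (hdeg : Module.finrank ℚ K = 2)
    (hdisc : NumberField.discr K = -(D : ℤ))
    (sd : K) (hsd : (sd : ℂ) ^ 2 = -(D : ℂ))
    (c : FractionalIdeal (𝓞 K)⁰ K) (hc : c ≠ 0)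
    (α₀ : K) (hα₀ : α₀ ≠ 0) :
    Set.BijOn (fun H => dMat (star (α₀ : ℂ)) * H * dMat (α₀ : ℂ))
      (Lambda2 K sd (FractionalIdeal.spanSingleton (𝓞 K)⁰ α₀ * c))
      (Lambda2 K sd c) ∧
    Set.BijOn (fun H => dMat (star (α₀ : ℂ)) * H * dMat (α₀ : ℂ))
      (Lambda2Pos K sd (FractionalIdeal.spanSingleton (𝓞 K)⁰ α₀ * c))
      (Lambda2Pos K sd c) :=
  stmt0_general D hD K hdeg sd hsd c α₀ hα₀

end
end

section
/- Let 𝔠 be a nonzero fractional ideal of K with norm C = N(𝔠), and let 𝔠̄ denote its conjugate ideal. Let B = [[b₁, β],[β̄, b₄]] be a hermitian matrix with b₁, b₄ ∈ ℚ and β ∈ K. Then Tr(B·Z) ∈ ℤ for every matrix Z = [[n, μ],[μ̄, C·m]] with n, m ∈ ℤ and μ ∈ 𝔠̄, if and only if B ∈ Λ₂^𝔠(𝓞). -/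
/-!
Since `star μ = σ μ`, the trace of `B Z` is `b₁ n + Tr_{K/ℚ}(β σ(μ)) + b₄ C m`, so the condition
says that `b₁ ∈ ℤ`, `b₄ C ∈ ℤ` and that `β` lies in the trace dual of `𝔠`, which is `𝔡⁻¹ 𝔠⁻¹` for
the inverse different `𝔡⁻¹` (the trace dual of `𝓞`). Because `ℤ` is saturated in `𝓞`, a quadratic
field has `𝓞 = ℤ[θ]`; then `𝔡⁻¹ = (θ - σθ)⁻¹ 𝓞` by an explicit computation with `Tr(x)` and
`Tr(xθ)`, and `(θ - σθ)² = disc(1, θ) = -D = (√-D)²`, so `𝔡⁻¹ = (√-D)⁻¹ 𝓞`.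
-/

open scoped ComplexOrder nonZeroDivisors
open NumberField Matrix

noncomputable section

namespace Algebra.IsQuadraticExtension

variable {F L : Type*} [Field F] [Field L] [Algebra F L] [IsQuadraticExtension F L]
  [IsGalois F L]

theorem natCard_gal : Nat.card Gal(L/F) = 2 :=
  finrank_eq_two F L ▸ IsGalois.card_aut_eq_finrank F L

theorem apply_apply (σ : Gal(L/F)) (x : L) : σ (σ x) = x := by
  have h : σ ^ 2 = 1 := natCard_gal (F := F) (L := L) ▸ pow_card_eq_one'
  exact congr($h x)

theorem algebraMap_trace_eq_add {σ : Gal(L/F)} (hσ : σ ≠ 1) (x : L) :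
    algebraMap F L (Algebra.trace F L x) = x + σ x := by
  classical
  have huniv : (Finset.univ : Finset Gal(L/F)) = {1, σ} := by
    refine (Finset.eq_univ_of_card _ ?_).symm
    rw [Finset.card_pair hσ.symm, ← Nat.card_eq_fintype_card, natCard_gal]
  rw [trace_eq_sum_automorphisms, huniv, Finset.sum_pair hσ.symm, AlgEquiv.one_apply]

end Algebra.IsQuadraticExtension

namespace NumberField.RingOfIntegers

@[simp, norm_cast]
theorem coe_intCast {K : Type*} [Field K] (n : ℤ) : ((n : 𝓞 K) : K) = n :=
  map_intCast (algebraMap (𝓞 K) K) n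

variable {K : Type*} [Field K] [NumberField K]

theorem exists_intCast_eq_of_zsmul_eq_intCast {r k : ℤ} (hr : r ≠ 0) {x : 𝓞 K}
    (h : r • x = k) : ∃ z : ℤ, (z : 𝓞 K) = x := by
  have hxK : (x : K) = algebraMap ℚ K (k / r) := by
    have := congrArg ((↑) : 𝓞 K → K) h
    simp only [zsmul_eq_mul, map_mul, map_intCast] at this
    rw [map_div₀, map_intCast, map_intCast, eq_div_iff (by exact_mod_cast hr), mul_comm, this]
  have hint : IsIntegral ℤ ((k : ℚ) / r) :=
    (isIntegral_algebraMap_iff (algebraMap ℚ K).injective).mp (hxK ▸ x.isIntegral_coe)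
  obtain ⟨z, hz⟩ := IsIntegrallyClosed.isIntegral_iff.mp hint
  exact ⟨z, RingOfIntegers.coe_injective (by simp [hxK, ← hz])⟩

/-- `ℤ` is saturated in `𝓞 K`, so `𝓞 K ⧸ ℤ` is free of rank one; `θ` lifts a generator. -/
theorem exists_eq_intCast_add_intCast_mul [Algebra.IsQuadraticExtension ℚ K] :
    ∃ θ : 𝓞 K, ∀ x : 𝓞 K, ∃ p q : ℤ, x = p + q * θ := by
  set N := LinearMap.range (Algebra.linearMap ℤ (𝓞 K))
  have : Module.IsTorsionFree ℤ (𝓞 K ⧸ N) := by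
    refine Module.IsTorsionFree.of_smul_eq_zero fun r y hy ↦ ?_
    obtain ⟨x, rfl⟩ := Submodule.Quotient.mk_surjective N y
    rw [← Submodule.Quotient.mk_smul, Submodule.Quotient.mk_eq_zero] at hy
    obtain ⟨k, hk⟩ := hy
    refine or_iff_not_imp_left.mpr fun hr ↦ (Submodule.Quotient.mk_eq_zero N).mpr ?_
    exact exists_intCast_eq_of_zsmul_eq_intCast hr hk.symm
  have hrank : Module.finrank ℤ (𝓞 K ⧸ N) = 1 := by
    have := N.finrank_quotient_add_finrank
    rw [LinearMap.finrank_range_of_inj (algebraMap ℤ (𝓞 K)).injective_int, Module.finrank_self,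
      RingOfIntegers.rank, Algebra.IsQuadraticExtension.finrank_eq_two] at this
    omega
  let b := Module.finBasisOfFinrankEq ℤ _ hrank
  obtain ⟨θ, hθ⟩ := Submodule.Quotient.mk_surjective N (b 0)
  refine ⟨θ, fun x ↦ ?_⟩
  have hx : N.mkQ x = b.repr (N.mkQ x) 0 • N.mkQ θ := by
    rw [N.mkQ_apply θ, hθ]
    simpa using (b.sum_repr (N.mkQ x)).symm
  rw [← sub_eq_zero, ← map_smul, ← map_sub, Submodule.mkQ_apply,
    Submodule.Quotient.mk_eq_zero] at hx
  obtain ⟨p, hp⟩ := hx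
  exact ⟨p, b.repr (N.mkQ x) 0, by rw [← zsmul_eq_mul, ← sub_eq_iff_eq_add, ← hp]; rfl⟩

end NumberField.RingOfIntegers

namespace NumberField

open Algebra.IsQuadraticExtension FractionalIdeal

variable {K : Type*} [Field K] [NumberField K] [Algebra.IsQuadraticExtension ℚ K]

section Generator

variable {σ : Gal(K/ℚ)} (hσ : σ ≠ 1)
include hσ

theorem intCast_trace_int_eq_add (x : 𝓞 K) :
    ((Algebra.trace ℤ (𝓞 K) x : ℤ) : K) = x + σ x := by
  rw [← algebraMap_trace_eq_add hσ, ← Algebra.coe_trace_int, map_intCast]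

theorem exists_coe_eq_mul_sub (θ : 𝓞 K) {x : K}
    (h₁ : Algebra.trace ℚ K x ∈ (algebraMap ℤ ℚ).range)
    (h₂ : Algebra.trace ℚ K (x * θ) ∈ (algebraMap ℤ ℚ).range) :
    ∃ y : 𝓞 K, (y : K) = x * (θ - σ θ) := by
  obtain ⟨k₁, hk₁⟩ := h₁
  obtain ⟨k₂, hk₂⟩ := h₂
  replace hk₁ := congr(algebraMap ℚ K $hk₁)
  replace hk₂ := congr(algebraMap ℚ K $hk₂)
  rw [eq_intCast, map_intCast, algebraMap_trace_eq_add hσ] at hk₁ hk₂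
  rw [map_mul] at hk₂
  -- `x (θ - σθ) = Tr(xθ) - σθ Tr(x)`, and `σθ = Tr(θ) - θ`
  refine ⟨(k₂ - k₁ * Algebra.trace ℤ (𝓞 K) θ : ℤ) + k₁ * θ, ?_⟩
  push_cast
  rw [intCast_trace_int_eq_add hσ]
  linear_combination hk₂ - σ θ * hk₁

variable {θ : 𝓞 K} (hθ : ∀ x : 𝓞 K, ∃ p q : ℤ, x = p + q * θ)
include hθ

theorem intCast_discr_eq_sq : (discr K : K) = ((θ : K) - σ θ) ^ 2 := by
  have hspan : ⊤ ≤ Submodule.span ℤ (Set.range ![(1 : 𝓞 K), θ]) := by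
    rintro x -
    obtain ⟨p, q, rfl⟩ := hθ x
    rw [Matrix.range_cons, Matrix.range_cons, Matrix.range_empty, Set.union_empty,
      Set.union_singleton, Set.pair_comm, Submodule.mem_span_pair]
    exact ⟨p, q, by simp [zsmul_eq_mul]⟩
  have hcard : Fintype.card (Fin 2) = Module.finrank ℤ (𝓞 K) := by
    rw [RingOfIntegers.rank, Algebra.IsQuadraticExtension.finrank_eq_two, Fintype.card_fin]
  rw [← discr_eq_discr K (basisOfTopLeSpanOfCardEqFinrank _ hspan hcard),
    coe_basisOfTopLeSpanOfCardEqFinrank, Algebra.discr_def, Matrix.det_fin_two]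
  simp only [Algebra.traceMatrix_apply, Algebra.traceForm_apply, Matrix.cons_val_zero,
    Matrix.cons_val_one, Int.cast_sub, Int.cast_mul, intCast_trace_int_eq_add hσ]
  push_cast
  simp only [mul_one, one_mul, map_one, map_mul]
  ring

theorem coe_sub_ne_zero : (θ : K) - σ θ ≠ 0 := by
  intro h
  have := intCast_discr_eq_sq hσ hθ
  rw [h, zero_pow two_ne_zero, Int.cast_eq_zero] at this
  exact discr_ne_zero K this

theorem trace_mul_inv_sub_mem (w : 𝓞 K) :
    Algebra.trace ℚ K (w * ((θ : K) - σ θ)⁻¹) ∈ (algebraMap ℤ ℚ).range := by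
  obtain ⟨p, q, rfl⟩ := hθ w
  refine ⟨q, (algebraMap ℚ K).injective ?_⟩
  have hδ := coe_sub_ne_zero hσ hθ
  have hσδ : σ ((θ : K) - σ θ) = -((θ : K) - σ θ) := by rw [map_sub, apply_apply, neg_sub]
  rw [eq_intCast, map_intCast, algebraMap_trace_eq_add hσ, map_mul, map_inv₀, hσδ]
  push_cast
  simp only [map_add, map_mul, map_intCast]
  field_simp
  ring

theorem dual_one_eq_spanSingleton_inv :
    dual ℤ ℚ (1 : FractionalIdeal (𝓞 K)⁰ K) = spanSingleton (𝓞 K)⁰ ((θ : K) - σ θ)⁻¹ := by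
  ext x
  rw [mem_dual (one_ne_zero' (FractionalIdeal (𝓞 K)⁰ K)), mem_spanSingleton]
  simp only [mem_one_iff, forall_exists_index, forall_apply_eq_imp_iff, Algebra.traceForm_apply]
  constructor
  · intro h
    obtain ⟨y, hy⟩ := exists_coe_eq_mul_sub hσ θ (by simpa using h 1) (h θ)
    refine ⟨y, ?_⟩
    rw [Algebra.smul_def, ← RingOfIntegers.coe_eq_algebraMap, hy,
      mul_inv_cancel_right₀ (coe_sub_ne_zero hσ hθ)]
  · rintro ⟨z, rfl⟩ b
    simpa [Algebra.smul_def, mul_right_comm] using trace_mul_inv_sub_mem hσ hθ (z * b)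

end Generator

theorem dual_one_eq_spanSingleton_inv_of_sq_eq_discr {s : K} (hs : s ^ 2 = discr K) :
    dual ℤ ℚ (1 : FractionalIdeal (𝓞 K)⁰ K) = (spanSingleton (𝓞 K)⁰ s)⁻¹ := by
  obtain ⟨σ, hσ, -⟩ := (Nat.card_eq_two_iff' 1).mp (natCard_gal (F := ℚ) (L := K))
  obtain ⟨θ, hθ⟩ := RingOfIntegers.exists_eq_intCast_add_intCast_mul (K := K)
  rw [dual_one_eq_spanSingleton_inv hσ hθ, spanSingleton_inv]
  rcases sq_eq_sq_iff_eq_or_eq_neg.mp (hs.trans (intCast_discr_eq_sq hσ hθ)) with h | h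
  · rw [h]
  · rw [h, inv_neg, spanSingleton_eq_spanSingleton]
    exact ⟨-1, by simp⟩

end NumberField

theorem Complex.star_eq_neg_of_sq_eq_neg_natCast {z : ℂ} {D : ℕ} (h : z ^ 2 = -D) :
    star z = -z := by
  have hre := congr(Complex.re $h)
  have him := congr(Complex.im $h)
  simp only [sq, Complex.mul_re, Complex.mul_im, Complex.neg_re, Complex.neg_im,
    Complex.natCast_re, Complex.natCast_im, neg_zero] at hre him
  have hz : z.re = 0 := by
    rcases mul_eq_zero.mp (show z.re * z.im = 0 by linarith) with h0 | h0
    · exact h0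
    · rw [h0] at hre; nlinarith [sq_nonneg z.re, (D.cast_nonneg : (0:ℝ) ≤ D)]
  exact Complex.ext (by simp [hz]) (by simp)

namespace IntermediateField

variable {K : IntermediateField ℚ ℂ} [Algebra.IsQuadraticExtension ℚ K]
  (σ : K ≃+* K) (hσ : ∀ x : K, ((σ x : K) : ℂ) = star (x : ℂ)) {z : K} (hz : star (z : ℂ) ≠ z)
include hσ hz

theorem ratCast_trace_eq_add_star (x : K) :
    ((Algebra.trace ℚ K x : ℚ) : ℂ) = x + star (x : ℂ) := by
  have hσ1 : σ.toRatAlgEquiv ≠ 1 := fun h ↦ hz (by rw [← hσ]; exact congr(((($h) z : K) : ℂ)))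
  have := congr(((↑) : K → ℂ) $(Algebra.IsQuadraticExtension.algebraMap_trace_eq_add hσ1 x))
  simpa [hσ] using this

theorem trace_mul_eq_ratCast (b₁ b₄ C : ℚ) (β μ : K) (n m : ℤ) :
    (!![(b₁ : ℂ), (β : ℂ); star (β : ℂ), (b₄ : ℂ)] *
        !![(n : ℂ), (μ : ℂ); star (μ : ℂ), (C : ℂ) * (m : ℂ)]).trace =
      ((n • b₁ + Algebra.trace ℚ K (β * σ μ) + m • (b₄ * C) : ℚ) : ℂ) := by
  simp only [Matrix.mul_fin_two, Matrix.trace_fin_two, Matrix.of_apply, Matrix.cons_val',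
    Matrix.cons_val_zero, Matrix.cons_val_one, Matrix.empty_val', Matrix.cons_val_fin_one]
  push_cast [zsmul_eq_mul, ratCast_trace_eq_add_star σ hσ hz, hσ, star_mul', star_star]
  ring

end IntermediateField

theorem exists_intCast_eq_ratCast_iff {𝕜 : Type*} [DivisionRing 𝕜] [CharZero 𝕜] (q : ℚ) :
    (∃ k : ℤ, (q : 𝕜) = k) ↔ q ∈ (algebraMap ℤ ℚ).range := by
  refine exists_congr fun k ↦ ?_
  rw [eq_intCast, eq_comm]
  exact_mod_cast Iff.rfl

theorem AddSubgroup.forall_zsmul_add_add_zsmul_mem_iff {G M : Type*} [AddCommGroup G] [Zero M]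
    (S : AddSubgroup G) {s : Set M} (hs : 0 ∈ s) {f : M → G} (hf : f 0 = 0) (a b : G) :
    (∀ n m : ℤ, ∀ x ∈ s, n • a + f x + m • b ∈ S) ↔ a ∈ S ∧ b ∈ S ∧ ∀ x ∈ s, f x ∈ S := by
  constructor
  · intro h
    refine ⟨by simpa [hf] using h 1 0 0 hs, by simpa [hf] using h 0 1 0 hs, fun x hx ↦ ?_⟩
    simpa using h 0 0 x hx
  · rintro ⟨ha, hb, hfs⟩ n m x hx
    exact add_mem (add_mem (zsmul_mem ha n) (hfs x hx)) (zsmul_mem hb m)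

theorem mem_Lambda2_iff {K : IntermediateField ℚ ℂ} [NumberField K] {sd : K}
    {c : FractionalIdeal (𝓞 K)⁰ K} (hc : c ≠ 0) (b₁ b₄ : ℚ) (β : K) :
    !![(b₁ : ℂ), (β : ℂ); star (β : ℂ), (b₄ : ℂ)] ∈ Lambda2 K sd c ↔
      b₁ ∈ (algebraMap ℤ ℚ).range ∧ b₄ * FractionalIdeal.absNorm c ∈ (algebraMap ℤ ℚ).range ∧
        β ∈ (FractionalIdeal.spanSingleton (𝓞 K)⁰ sd)⁻¹ * c⁻¹ := by
  have hC : (FractionalIdeal.absNorm c : ℂ) ≠ 0 := by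
    exact_mod_cast mt FractionalIdeal.absNorm_eq_zero_iff.mp hc
  have hb₄ : ∀ m : ℤ, (b₄ : ℂ) = m / FractionalIdeal.absNorm c ↔
      algebraMap ℤ ℚ m = b₄ * FractionalIdeal.absNorm c := by
    intro m
    rw [eq_div_iff hC, eq_intCast, eq_comm]
    exact_mod_cast Iff.rfl
  constructor
  · rintro ⟨n, m, a, ha, hB⟩
    have h00 : (b₁ : ℂ) = n := by simpa using congr($hB 0 0)
    have h01 : β = a := Subtype.ext (by simpa using congr($hB 0 1))
    have h11 : (b₄ : ℂ) = m / FractionalIdeal.absNorm c := by simpa using congr($hB 1 1)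
    exact ⟨⟨n, by exact_mod_cast h00.symm⟩, ⟨m, (hb₄ m).mp h11⟩, h01 ▸ ha⟩
  · rintro ⟨⟨n, hn⟩, ⟨m, hm⟩, hβ⟩
    refine ⟨n, m, β, hβ, ?_⟩
    rw [← (hb₄ m).mpr hm, ← hn, eq_intCast, Rat.cast_intCast]

theorem stmt4_general
    (D : ℕ)
    (K : IntermediateField ℚ ℂ) [NumberField K]
    (hdeg : Module.finrank ℚ K = 2)
    (hdisc : NumberField.discr K = -(D : ℤ))
    (sd : K) (hsd : (sd : ℂ) ^ 2 = -(D : ℂ))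
    (σ : K ≃+* K) (hσ : ∀ x : K, ((σ x : K) : ℂ) = star (x : ℂ))
    (c : FractionalIdeal (𝓞 K)⁰ K) (hc : c ≠ 0)
    (b₁ b₄ : ℚ) (β : K) :
    (∀ (n m : ℤ) (μ : K), σ μ ∈ c →
        ∃ k : ℤ,
          (!![(b₁ : ℂ), (β : ℂ); star (β : ℂ), (b₄ : ℂ)] *
            !![(n : ℂ), (μ : ℂ);
               star (μ : ℂ), (FractionalIdeal.absNorm c : ℂ) * (m : ℂ)]).trace = (k : ℂ)) ↔
      !![(b₁ : ℂ), (β : ℂ); star (β : ℂ), (b₄ : ℂ)] ∈ Lambda2 K sd c := by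
  have : Algebra.IsQuadraticExtension ℚ K := ⟨hdeg⟩
  have hsd_discr : sd ^ 2 = discr K := Subtype.ext (by push_cast [hsd, hdisc]; rfl)
  have hsd_star : star (sd : ℂ) ≠ sd := by
    have hsd0 : (sd : ℂ) ≠ 0 := fun h ↦ discr_ne_zero K <| by
      rw [← Int.cast_eq_zero (α := K), ← hsd_discr, (by exact_mod_cast h : sd = 0), sq, mul_zero]
    rwa [Complex.star_eq_neg_of_sq_eq_neg_natCast hsd, ne_eq, neg_eq_self]
  have hdual : FractionalIdeal.dual ℤ ℚ c = (FractionalIdeal.spanSingleton _ sd)⁻¹ * c⁻¹ := by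
    rw [FractionalIdeal.dual_eq_mul_inv, dual_one_eq_spanSingleton_inv_of_sq_eq_discr hsd_discr]
  rw [mem_Lambda2_iff hc, ← hdual, FractionalIdeal.mem_dual hc]
  simp only [IntermediateField.trace_mul_eq_ratCast σ hσ hsd_star, exists_intCast_eq_ratCast_iff,
    Algebra.traceForm_apply]
  exact (forall₂_congr fun n m ↦ σ.surjective.forall.symm).trans
    ((algebraMap ℤ ℚ).range.toAddSubgroup.forall_zsmul_add_add_zsmul_mem_iff
      (s := (c : Set K)) c.zero_mem (f := fun ν ↦ Algebra.trace ℚ K (β * ν)) (by simp) _ _)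

/-- Let `𝔠` be a nonzero fractional ideal of `K` with norm `C`, and
let `B = [[b₁, β], [β̄, b₄]]` be hermitian with `b₁, b₄ ∈ ℚ` and `β ∈ K`.  Then
`Tr(B·Z) ∈ ℤ` for every `Z = [[n, μ], [μ̄, C·m]]` with `n, m ∈ ℤ` and `μ ∈ 𝔠̄`
(equivalently `σ(μ) ∈ 𝔠`, where `σ` is the nontrivial automorphism of `K`, given by
complex conjugation), if and only if `B ∈ Λ₂^𝔠(𝓞)`. -/
theorem stmt4
    (D : ℕ) (hD : 0 < D)
    (K : IntermediateField ℚ ℂ) [NumberField K]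
    (hdeg : Module.finrank ℚ K = 2)
    (hdisc : NumberField.discr K = -(D : ℤ))
    (sd : K) (hsd : (sd : ℂ) ^ 2 = -(D : ℂ))
    (σ : K ≃+* K) (hσ : ∀ x : K, ((σ x : K) : ℂ) = star (x : ℂ))
    (c : FractionalIdeal (𝓞 K)⁰ K) (hc : c ≠ 0)
    (b₁ b₄ : ℚ) (β : K) :
    (∀ (n m : ℤ) (μ : K), σ μ ∈ c →
        ∃ k : ℤ,
          (!![(b₁ : ℂ), (β : ℂ); star (β : ℂ), (b₄ : ℂ)] *
            !![(n : ℂ), (μ : ℂ);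
               star (μ : ℂ), (FractionalIdeal.absNorm c : ℂ) * (m : ℂ)]).trace = (k : ℂ)) ↔
      !![(b₁ : ℂ), (β : ℂ); star (β : ℂ), (b₄ : ℂ)] ∈ Lambda2 K sd c :=
  stmt4_general D K hdeg hdisc sd hsd σ hσ c hc b₁ b₄ β

end
end

section
/- Let D be a positive odd integer, and let h₁, h₂, h₃, h₄ be nonzero rational numbers with 2h₂ + h₃ ≠ 0. Write l_i = v₂(h_i), M = min(l₁, l₃, v₂(2h₂ + h₃), l₄), L = min(l₁, l₂, l₃, l₄), and ξ = h₁h₄ − h₃²/4 − (h₂ + h₃/2)²/D. Then: (a) if l₂ ≥ min(l₁, l₃, l₄), then M = L; (b) if l₂ < min(l₁, l₃, l₄), then M = l₂ + 1, L = l₂, ξ ≠ 0, and v₂(ξ) = 2·l₂ (in particular ξ·2^{−2(l₂+1)} is not a 2-adic integer). -/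
/-! Let `l = v₂(h₂)`. Since `v₂(2h₂) = l + 1`, the ultrametric inequality pins down
`v₂(2h₂ + h₃)`, which settles both identities between minima. Expanding the square,
`ξ = -h₂²/D + (h₁h₄ - (D + 1)h₃²/(4D) - h₂h₃/D)`; as `D` is odd and `D + 1` even, every term
of the bracket has valuation `> 2l`, while the leading term has valuation exactly `2l`. -/

/- Hypotheses `q ≠ 0 → n < padicValRat p q` say `n < v_p(q)` with the convention
`v_p(0) = ∞` (whereas `padicValRat p 0 = 0`). -/

namespace padicValRat

variable {p : ℕ} {q r : ℚ}

theorem lt_add_of_lt_of_lt [Fact p.Prime] {n : ℤ} (hq : q ≠ 0 → n < padicValRat p q)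
    (hr : r ≠ 0 → n < padicValRat p r) (hqr : q + r ≠ 0) : n < padicValRat p (q + r) := by
  rcases eq_or_ne q 0 with rfl | hq0
  · simpa using hr (by simpa using hqr)
  rcases eq_or_ne r 0 with rfl | hr0
  · simpa using hq hq0
  exact lt_of_lt_of_le (lt_min (hq hq0) (hr hr0)) (min_le_padicValRat_add hqr)

theorem add_ne_zero_of_lt (hq : q ≠ 0) (hr : r ≠ 0 → padicValRat p q < padicValRat p r) :
    q + r ≠ 0 := by
  intro hqr
  have hrq : r = -q := eq_neg_of_add_eq_zero_right hqr
  have := hr (by simpa [hrq] using hq)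
  rw [hrq, padicValRat.neg] at this
  exact this.false

theorem add_eq_left_of_lt [Fact p.Prime] (hq : q ≠ 0)
    (hr : r ≠ 0 → padicValRat p q < padicValRat p r) :
    padicValRat p (q + r) = padicValRat p q := by
  rcases eq_or_ne r 0 with rfl | hr0
  · rw [add_zero]
  exact add_eq_of_lt (add_ne_zero_of_lt hq hr) hq hr0 (hr hr0)

end padicValRat

theorem padicValRat_two_mul {x : ℚ} (hx : x ≠ 0) :
    padicValRat 2 (2 * x) = padicValRat 2 x + 1 := by
  rw [padicValRat.mul two_ne_zero hx, add_comm]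
  simpa using padicValRat.self (p := 2) one_lt_two

theorem padicValRat_two_natCast_of_odd {n : ℕ} (hn : Odd n) : padicValRat 2 n = 0 := by
  simp [padicValNat.eq_zero_of_not_dvd hn.not_two_dvd_nat]

theorem one_le_padicValRat_two_natCast_of_even {n : ℕ} (hn : Even n) (hn0 : n ≠ 0) :
    1 ≤ padicValRat 2 n := by
  rw [padicValRat.of_nat]
  exact_mod_cast one_le_padicValNat_of_dvd hn0 hn.two_dvd

section

variable {h₁ h₂ h₃ h₄ : ℚ}

theorem min_le_padicValRat_two_mul_add (hh₂ : h₂ ≠ 0) (hsum : 2 * h₂ + h₃ ≠ 0) :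
    min (padicValRat 2 h₂ + 1) (padicValRat 2 h₃) ≤ padicValRat 2 (2 * h₂ + h₃) := by
  simpa [padicValRat_two_mul hh₂] using padicValRat.min_le_padicValRat_add (p := 2) hsum

theorem padicValRat_two_mul_add_of_lt (hh₂ : h₂ ≠ 0)
    (hlt : h₃ ≠ 0 → padicValRat 2 h₂ + 1 < padicValRat 2 h₃) :
    padicValRat 2 (2 * h₂ + h₃) = padicValRat 2 h₂ + 1 := by
  rw [← padicValRat_two_mul hh₂]
  exact padicValRat.add_eq_left_of_lt (mul_ne_zero two_ne_zero hh₂)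
    (by rwa [padicValRat_two_mul hh₂])

variable {D : ℕ}

theorem xi_eq_neg_sq_div_add (hD : D ≠ 0) :
    h₁ * h₄ - h₃ ^ 2 / 4 - (h₂ + h₃ / 2) ^ 2 / (D : ℚ) =
      -(h₂ ^ 2 / D) + (h₁ * h₄ - ((D + 1 : ℕ) : ℚ) * h₃ ^ 2 / (4 * D) - h₂ * h₃ / D) := by
  have : (D : ℚ) ≠ 0 := Nat.cast_ne_zero.2 hD
  push_cast
  field_simp
  ring

theorem lt_padicValRat_two_xi_remainder (hD : Odd D)
    (hl₁ : padicValRat 2 h₂ < padicValRat 2 h₁) (hl₃ : padicValRat 2 h₂ < padicValRat 2 h₃)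
    (hl₄ : padicValRat 2 h₂ < padicValRat 2 h₄) :
    h₁ * h₄ - ((D + 1 : ℕ) : ℚ) * h₃ ^ 2 / (4 * D) - h₂ * h₃ / D ≠ 0 →
      2 * padicValRat 2 h₂ < padicValRat 2
        (h₁ * h₄ - ((D + 1 : ℕ) : ℚ) * h₃ ^ 2 / (4 * D) - h₂ * h₃ / D) := by
  have hD0 : (D : ℚ) ≠ 0 := Nat.cast_ne_zero.2 hD.pos.ne'
  have hvD := padicValRat_two_natCast_of_odd hD
  have hv4 : padicValRat 2 (4 : ℚ) = 2 := by
    rw [show (4 : ℚ) = (2 : ℕ) ^ 2 by norm_num, padicValRat.pow, padicValRat.self one_lt_two]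
    norm_num
  simp only [sub_eq_add_neg]
  refine padicValRat.lt_add_of_lt_of_lt (padicValRat.lt_add_of_lt_of_lt ?_ ?_) ?_
  · intro h
    rw [padicValRat.mul (left_ne_zero_of_mul h) (right_ne_zero_of_mul h)]
    omega
  · intro h
    have hh₃ : h₃ ≠ 0 := by rintro rfl; simp at h
    have hD1 := one_le_padicValRat_two_natCast_of_even hD.add_one D.succ_ne_zero
    have hD1ne : ((D + 1 : ℕ) : ℚ) ≠ 0 := Nat.cast_ne_zero.2 D.succ_ne_zero
    rw [padicValRat.neg, padicValRat.div (mul_ne_zero hD1ne (pow_ne_zero 2 hh₃))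
      (mul_ne_zero four_ne_zero hD0), padicValRat.mul hD1ne (pow_ne_zero 2 hh₃),
      padicValRat.mul four_ne_zero hD0, padicValRat.pow, hv4, hvD]
    omega
  · intro h
    have hh₃ : h₃ ≠ 0 := by rintro rfl; simp at h
    have hh₂ : h₂ ≠ 0 := by rintro rfl; simp at h
    rw [padicValRat.neg, padicValRat.div (mul_ne_zero hh₂ hh₃) hD0, padicValRat.mul hh₂ hh₃, hvD]
    omega

theorem padicValRat_two_xi (hD : Odd D) (hh₂ : h₂ ≠ 0)
    (hl₁ : padicValRat 2 h₂ < padicValRat 2 h₁) (hl₃ : padicValRat 2 h₂ < padicValRat 2 h₃)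
    (hl₄ : padicValRat 2 h₂ < padicValRat 2 h₄) :
    h₁ * h₄ - h₃ ^ 2 / 4 - (h₂ + h₃ / 2) ^ 2 / (D : ℚ) ≠ 0 ∧
      padicValRat 2 (h₁ * h₄ - h₃ ^ 2 / 4 - (h₂ + h₃ / 2) ^ 2 / (D : ℚ)) =
        2 * padicValRat 2 h₂ := by
  have hD0 : (D : ℚ) ≠ 0 := Nat.cast_ne_zero.2 hD.pos.ne'
  have hlead : -(h₂ ^ 2 / D) ≠ 0 := neg_ne_zero.2 (div_ne_zero (pow_ne_zero 2 hh₂) hD0)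
  have hvlead : padicValRat 2 (-(h₂ ^ 2 / D)) = 2 * padicValRat 2 h₂ := by
    rw [padicValRat.neg, padicValRat.div (pow_ne_zero 2 hh₂) hD0, padicValRat.pow,
      padicValRat_two_natCast_of_odd hD]
    push_cast
    ring
  have hrem := lt_padicValRat_two_xi_remainder hD hl₁ hl₃ hl₄
  rw [← hvlead] at hrem
  rw [xi_eq_neg_sq_div_add hD.pos.ne', padicValRat.add_eq_left_of_lt hlead hrem, hvlead]
  exact ⟨padicValRat.add_ne_zero_of_lt hlead hrem, rfl⟩

end

theorem stmt10_general (D : ℕ) (hDodd : Odd D)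
    (h₁ h₂ h₃ h₄ : ℚ)
    (hh₂ : h₂ ≠ 0)
    (hsum : 2 * h₂ + h₃ ≠ 0) :
    (padicValRat 2 h₂ ≥ min (min (padicValRat 2 h₁) (padicValRat 2 h₃))
        (padicValRat 2 h₄) →
      min (min (min (padicValRat 2 h₁) (padicValRat 2 h₃))
          (padicValRat 2 (2 * h₂ + h₃))) (padicValRat 2 h₄) =
        min (min (min (padicValRat 2 h₁) (padicValRat 2 h₂))
          (padicValRat 2 h₃)) (padicValRat 2 h₄)) ∧
    (padicValRat 2 h₂ < min (min (padicValRat 2 h₁) (padicValRat 2 h₃))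
        (padicValRat 2 h₄) →
      min (min (min (padicValRat 2 h₁) (padicValRat 2 h₃))
          (padicValRat 2 (2 * h₂ + h₃))) (padicValRat 2 h₄) = padicValRat 2 h₂ + 1 ∧
      min (min (min (padicValRat 2 h₁) (padicValRat 2 h₂))
          (padicValRat 2 h₃)) (padicValRat 2 h₄) = padicValRat 2 h₂ ∧
      h₁ * h₄ - h₃ ^ 2 / 4 - (h₂ + h₃ / 2) ^ 2 / (D : ℚ) ≠ 0 ∧
      padicValRat 2 (h₁ * h₄ - h₃ ^ 2 / 4 - (h₂ + h₃ / 2) ^ 2 / (D : ℚ)) =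
        2 * padicValRat 2 h₂) := by
  have hsum_ge := min_le_padicValRat_two_mul_add hh₂ hsum
  refine ⟨fun _ ↦ by omega, fun hl ↦ ?_⟩
  have hl₁ : padicValRat 2 h₂ < padicValRat 2 h₁ := by omega
  have hl₃ : padicValRat 2 h₂ < padicValRat 2 h₃ := by omega
  have hl₄ : padicValRat 2 h₂ < padicValRat 2 h₄ := by omega
  have hM : padicValRat 2 h₃ = padicValRat 2 h₂ + 1 ∨
      padicValRat 2 (2 * h₂ + h₃) = padicValRat 2 h₂ + 1 :=
    or_iff_not_imp_left.2 fun _ ↦ padicValRat_two_mul_add_of_lt hh₂ fun _ ↦ by omega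
  exact ⟨by omega, by omega, padicValRat_two_xi hDodd hh₂ hl₁ hl₃ hl₄⟩

/-- Let `D` be a positive odd integer and `h₁, h₂, h₃, h₄` nonzero
rationals with `2h₂ + h₃ ≠ 0`.  Write `lᵢ = v₂(hᵢ)`,
`M = min(l₁, l₃, v₂(2h₂+h₃), l₄)`, `L = min(l₁, l₂, l₃, l₄)` and
`ξ = h₁h₄ − h₃²/4 − (h₂ + h₃/2)²/D`.  Then:
(a) if `l₂ ≥ min(l₁, l₃, l₄)` then `M = L`;
(b) if `l₂ < min(l₁, l₃, l₄)` then `M = l₂ + 1`, `L = l₂`, `ξ ≠ 0` and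
`v₂(ξ) = 2·l₂`. -/
theorem stmt10 (D : ℕ) (hD : 0 < D) (hDodd : Odd D)
    (h₁ h₂ h₃ h₄ : ℚ)
    (hh₁ : h₁ ≠ 0) (hh₂ : h₂ ≠ 0) (hh₃ : h₃ ≠ 0) (hh₄ : h₄ ≠ 0)
    (hsum : 2 * h₂ + h₃ ≠ 0) :
    (padicValRat 2 h₂ ≥ min (min (padicValRat 2 h₁) (padicValRat 2 h₃))
        (padicValRat 2 h₄) →
      min (min (min (padicValRat 2 h₁) (padicValRat 2 h₃))
          (padicValRat 2 (2 * h₂ + h₃))) (padicValRat 2 h₄) =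
        min (min (min (padicValRat 2 h₁) (padicValRat 2 h₂))
          (padicValRat 2 h₃)) (padicValRat 2 h₄)) ∧
    (padicValRat 2 h₂ < min (min (padicValRat 2 h₁) (padicValRat 2 h₃))
        (padicValRat 2 h₄) →
      min (min (min (padicValRat 2 h₁) (padicValRat 2 h₃))
          (padicValRat 2 (2 * h₂ + h₃))) (padicValRat 2 h₄) = padicValRat 2 h₂ + 1 ∧
      min (min (min (padicValRat 2 h₁) (padicValRat 2 h₂))
          (padicValRat 2 h₃)) (padicValRat 2 h₄) = padicValRat 2 h₂ ∧
      h₁ * h₄ - h₃ ^ 2 / 4 - (h₂ + h₃ / 2) ^ 2 / (D : ℚ) ≠ 0 ∧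
      padicValRat 2 (h₁ * h₄ - h₃ ^ 2 / 4 - (h₂ + h₃ / 2) ^ 2 / (D : ℚ)) =
        2 * padicValRat 2 h₂) :=
  stmt10_general D hDodd h₁ h₂ h₃ h₄ hh₂ hsum
end

section
/- Let g ∈ GL₄(K) and λ ∈ ℚ^× satisfy σ(g)ᵀ·J·g = λ·J, where σ is applied to g entrywise. Then there exist α ∈ K^× and h ∈ GL₄(K) such that σ(h)ᵀ·J·h = λ·J, det(h) = λ², and g = h·r_α. -/
open Matrix NumberField

noncomputable section

/-!
Taking determinants in `σ(g)ᵀ J g = λ J` gives `σ(det g) · det g = λ⁴`, so `β = λ² / det g`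
satisfies `σ(β) β = 1`. Since `σ` is a nontrivial involution, Hilbert 90 writes `β = σ(α) / α`
with `α ≠ 0`, the witness being `t + σ(β t)` for a suitable `t`. Each `r_α` preserves `J`
exactly, so `h = g r_α⁻¹ = g r_{α⁻¹}` is again a similitude of factor `λ`, and
`det h = det g · σ(α) / α = λ²`.
-/

/-- The matrix `J = [[0, −1₂], [1₂, 0]]` in 2×2 block form, over a ring `R`. -/
def J4 (R : Type*) [Ring R] : Matrix (Fin 2 ⊕ Fin 2) (Fin 2 ⊕ Fin 2) R :=
  Matrix.fromBlocks 0 (-1) 1 0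

theorem AlgEquiv.involutive_of_finrank_eq_two {F K : Type*} [Field F] [Field K] [Algebra F K]
    (h : Module.finrank F K = 2) (σ : K ≃ₐ[F] K) : Function.Involutive σ := by
  have : FiniteDimensional F K := Module.finite_of_finrank_eq_succ h
  have hle : orderOf σ ≤ 2 := h ▸ orderOf_le_card_univ.trans AlgEquiv.card_le
  have hsq : σ ^ 2 = 1 := by
    rw [← orderOf_dvd_iff_pow_eq_one]
    interval_cases hn : orderOf σ
    · exact absurd hn (orderOf_pos σ).ne'
    · exact one_dvd 2
    · exact dvd_rfl
  exact fun x => DFunLike.congr_fun hsq x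

section Hilbert90

variable {K F : Type*} [Field K] [FunLike F K K] [RingHomClass F K K] {σ : F}

theorem map_add_map_mul_eq_mul (hσ : Function.Involutive σ) {β : K} (hβ : σ β * β = 1) (t : K) :
    σ (t + σ (β * t)) = β * (t + σ (β * t)) := by
  rw [map_add, hσ, map_mul]
  linear_combination -(σ t) * hβ

theorem exists_ne_zero_map_eq_mul (hσ : Function.Involutive σ) (hσ₁ : ∃ t, σ t ≠ t) {β : K}
    (hβ : σ β * β = 1) : ∃ α : K, α ≠ 0 ∧ σ α = β * α := by
  suffices ∃ t : K, t + σ (β * t) ≠ 0 by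
    obtain ⟨t, ht⟩ := this
    exact ⟨_, ht, map_add_map_mul_eq_mul hσ hβ t⟩
  by_contra! h
  obtain ⟨t, ht⟩ := hσ₁
  have h₁ := h 1
  rw [mul_one] at h₁
  have hβ' : σ β = -1 := by linear_combination h₁
  have hₜ := h t
  rw [map_mul, hβ'] at hₜ
  exact ht (by linear_combination -hₜ)

end Hilbert90

theorem J4_mul_self (R : Type*) [CommRing R] : J4 R * J4 R = -1 := by
  simp [J4, fromBlocks_multiply, ← fromBlocks_one, fromBlocks_neg]

theorem isUnit_det_J4 (R : Type*) [CommRing R] : IsUnit (J4 R).det :=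
  isUnit_det_of_right_inverse (B := -J4 R) (by rw [Matrix.mul_neg, J4_mul_self, neg_neg])

section Similitude

variable {ι K F : Type*} [Fintype ι] [Field K] [FunLike F K K] [RingHomClass F K K] (σ : F)
  {J g r : Matrix ι ι K} {c : K}

theorem map_det_mul_det_of_similitude [DecidableEq ι] (hJ : J.det ≠ 0)
    (hg : (g.map σ)ᵀ * J * g = c • J) : σ g.det * g.det = c ^ Fintype.card ι := by
  have hmap : (g.map σ).det = σ g.det := (RingHom.map_det (σ : K →+* K) g).symm
  have hdet := congrArg Matrix.det hg
  rw [det_mul, det_mul, det_transpose, hmap, det_smul] at hdet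
  exact mul_right_cancel₀ hJ (by rw [← hdet]; ring)

theorem similitude_mul (hg : (g.map σ)ᵀ * J * g = c • J) (hr : (r.map σ)ᵀ * J * r = J) :
    ((g * r).map σ)ᵀ * J * (g * r) = c • J := by
  rw [← RingHom.coe_coe σ, Matrix.map_mul, transpose_mul, RingHom.coe_coe σ]
  calc (r.map σ)ᵀ * (g.map σ)ᵀ * J * (g * r) = (r.map σ)ᵀ * ((g.map σ)ᵀ * J * g) * r := by
        simp only [Matrix.mul_assoc]
    _ = c • J := by rw [hg, Matrix.mul_smul, Matrix.smul_mul, hr]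

end Similitude

section rMat

variable {K F : Type*} [Field K] [FunLike F K K] (σ : F)

def rMat (α : K) : Matrix (Fin 2 ⊕ Fin 2) (Fin 2 ⊕ Fin 2) K :=
  fromBlocks (diagonal ![1, α]) 0 0 (diagonal ![1, (σ α)⁻¹])

theorem det_rMat (α : K) : (rMat σ α).det = α * (σ α)⁻¹ := by
  simp [rMat, Fin.prod_univ_two]

variable [RingHomClass F K K]

theorem rMat_one : rMat σ (1 : K) = 1 := by
  rw [rMat, map_one, inv_one, ← fromBlocks_one, ← diagonal_one]
  congr <;> ext i <;> fin_cases i <;> rfl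

theorem rMat_mul (α β : K) : rMat σ α * rMat σ β = rMat σ (α * β) := by
  simp only [rMat, fromBlocks_multiply, diagonal_mul_diagonal, Matrix.mul_zero, Matrix.zero_mul,
    add_zero, zero_add, map_mul, mul_inv]
  congr <;> ext i <;> fin_cases i <;> simp

theorem rMat_similitude {σ : F} (hσ : Function.Involutive σ) {α : K} (hα : α ≠ 0) :
    ((rMat σ α).map σ)ᵀ * J4 K * rMat σ α = J4 K := by
  simp only [rMat, J4, fromBlocks_map, fromBlocks_transpose, fromBlocks_multiply,
    diagonal_map (map_zero σ), diagonal_transpose, transpose_zero, Matrix.map_zero _ (map_zero σ),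
    Matrix.zero_mul, Matrix.mul_zero, Matrix.mul_one, Matrix.mul_neg, Matrix.neg_mul,
    diagonal_mul_diagonal, add_zero, zero_add, neg_zero]
  congr
  all_goals ext i; fin_cases i <;> simp [hσ α, hα]

end rMat

theorem stmt11_general (K : Type*) [Field K] [NumberField K]
    (hdeg : Module.finrank ℚ K = 2)
    (σ : K ≃ₐ[ℚ] K) (hσ : σ ≠ AlgEquiv.refl)
    (g : Matrix (Fin 2 ⊕ Fin 2) (Fin 2 ⊕ Fin 2) K)
    (lam : ℚ) (hlam : lam ≠ 0)
    (hrel : (g.map (fun x => σ x))ᵀ * J4 K * g = (lam : K) • J4 K) :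
    ∃ (α : K), α ≠ 0 ∧
      ∃ (h : Matrix (Fin 2 ⊕ Fin 2) (Fin 2 ⊕ Fin 2) K),
        IsUnit h.det ∧
        (h.map (fun x => σ x))ᵀ * J4 K * h = (lam : K) • J4 K ∧
        h.det = (lam : K) ^ 2 ∧
        g = h * Matrix.fromBlocks (Matrix.diagonal ![1, α]) 0 0
              (Matrix.diagonal ![1, (σ α)⁻¹]) := by
  have hinv : Function.Involutive σ := σ.involutive_of_finrank_eq_two hdeg
  have hlamK : (lam : K) ≠ 0 := Rat.cast_ne_zero.mpr hlam
  have hnorm : σ g.det * g.det = (lam : K) ^ 4 :=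
    map_det_mul_det_of_similitude σ (isUnit_det_J4 K).ne_zero hrel
  have hdet : g.det ≠ 0 := by
    rintro h
    rw [h, mul_zero] at hnorm
    exact pow_ne_zero 4 hlamK hnorm.symm
  have hβ : σ ((lam : K) ^ 2 / g.det) * ((lam : K) ^ 2 / g.det) = 1 := by
    rw [map_div₀, map_pow, map_ratCast, div_mul_div_comm, hnorm]
    field_simp
  obtain ⟨α, hα, hσα⟩ :=
    exists_ne_zero_map_eq_mul hinv (not_forall.mp fun h => hσ (AlgEquiv.ext h)) hβ
  have hdeth : (g * rMat σ α⁻¹).det = (lam : K) ^ 2 := by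
    rw [det_mul, det_rMat, map_inv₀, inv_inv, hσα]
    field_simp
  refine ⟨α, hα, g * rMat σ α⁻¹, hdeth ▸ (pow_ne_zero 2 hlamK).isUnit,
    similitude_mul σ hrel (rMat_similitude hinv (inv_ne_zero hα)), hdeth, ?_⟩
  change g = g * rMat σ α⁻¹ * rMat σ α
  rw [Matrix.mul_assoc, rMat_mul, inv_mul_cancel₀ hα, rMat_one, Matrix.mul_one]

/-- Let `K` be an imaginary quadratic field with nontrivial
automorphism `σ`.  If `g ∈ GL₄(K)` and `λ ∈ ℚ^×` satisfy `σ(g)ᵀ J g = λ J`, then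
there are `α ∈ K^×` and `h ∈ GL₄(K)` with `σ(h)ᵀ J h = λ J`, `det h = λ²` and
`g = h · r_α`, where `r_α = diag(1, α, 1, σ(α)⁻¹)`. -/
theorem stmt11 (K : Type*) [Field K] [NumberField K]
    (hdeg : Module.finrank ℚ K = 2) (hdisc : NumberField.discr K < 0)
    (σ : K ≃ₐ[ℚ] K) (hσ : σ ≠ AlgEquiv.refl)
    (g : Matrix (Fin 2 ⊕ Fin 2) (Fin 2 ⊕ Fin 2) K) (hg : IsUnit g.det)
    (lam : ℚ) (hlam : lam ≠ 0)
    (hrel : (g.map (fun x => σ x))ᵀ * J4 K * g = (lam : K) • J4 K) :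
    ∃ (α : K), α ≠ 0 ∧
      ∃ (h : Matrix (Fin 2 ⊕ Fin 2) (Fin 2 ⊕ Fin 2) K),
        IsUnit h.det ∧
        (h.map (fun x => σ x))ᵀ * J4 K * h = (lam : K) • J4 K ∧
        h.det = (lam : K) ^ 2 ∧
        g = h * Matrix.fromBlocks (Matrix.diagonal ![1, α]) 0 0
              (Matrix.diagonal ![1, (σ α)⁻¹]) :=
  stmt11_general K hdeg σ hσ g lam hlam hrel

end
end
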